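/- The 3×3 matrix P = (P_{ij})_{i,j=1}^{3} is diagonal: P_{ij} = 0 whenever i ≠ j. Moreover P₁₁ = P₂₂. -/

import Mathlib

open MeasureTheory

/-- `τ₁ = (1/2)(1/μ + 1/(λ+2μ))`. -/
noncomputable def tau1 (lam mu : ℝ) : ℝ := (1 / 2) * (1 / mu + 1 / (lam + 2 * mu))

/-- `τ₂ = (1/2)(1/μ − 1/(λ+2μ))`. -/
noncomputable def tau2 (lam mu : ℝ) : ℝ := (1 / 2) * (1 / mu - 1 / (lam + 2 * mu))

/-- `ϱ₁ = (γ − ln 2 − iπ/2 − 1)/(8π)`. -/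
noncomputable def varrho1 : ℂ :=
  ((Real.eulerMascheroniConstant : ℂ) - (Real.log 2 : ℝ) - Real.pi * Complex.I / 2 - 1)
    / (8 * Real.pi)

/-- `ϱ₂ = −(γ − ln 2 − iπ/2 − 3/2)/(128π)`. -/
noncomputable def varrho2 : ℂ :=
  -(((Real.eulerMascheroniConstant : ℂ) - (Real.log 2 : ℝ) - Real.pi * Complex.I / 2
      - 3 / 2) / (128 * Real.pi))

/-- `σ₁ = (1/μ²)(ϱ₁ − 5 ln μ/(256π) + 4ϱ₂ + 1/(128π))
        − (1/(λ+2μ)²)(4ϱ₂ + 1/(128π) − ln(λ+2μ)/(64π))`. -/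
noncomputable def sigma1 (lam mu : ℝ) : ℂ :=
  (1 / (mu : ℂ) ^ 2) *
      (varrho1 - 5 * (Real.log mu : ℂ) / (256 * Real.pi) + 4 * varrho2
        + 1 / (128 * Real.pi))
    - (1 / ((lam : ℂ) + 2 * mu) ^ 2) *
        (4 * varrho2 + 1 / (128 * Real.pi)
          - (Real.log (lam + 2 * mu) : ℂ) / (64 * Real.pi))

/-- `σ₂ = (8/μ²)(ϱ₂ − ln μ/(256π)) − (8/(λ+2μ)²)(ϱ₂ − ln(λ+2μ)/(256π)) + 3τ₁τ₂/(16π)`. -/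
noncomputable def sigma2 (lam mu : ℝ) : ℂ :=
  (8 / (mu : ℂ) ^ 2) * (varrho2 - (Real.log mu : ℂ) / (256 * Real.pi))
    - (8 / ((lam : ℂ) + 2 * mu) ^ 2) *
        (varrho2 - (Real.log (lam + 2 * mu) : ℂ) / (256 * Real.pi))
    + 3 * (tau1 lam mu : ℂ) * (tau2 lam mu : ℂ) / (16 * Real.pi)

/-- The complex matrix-valued function `B(x)` with entries
`b_{ij}(x) = δ_{ij}(σ₁|x|² + (τ₁τ₂ − μ⁻²)|x|² ln|x|/(8π)) + σ₂ x_i x_j + (τ₁τ₂/(4π)) x_i x_j ln|x|`. -/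
noncomputable def Bmat (lam mu : ℝ) (x : EuclideanSpace ℝ (Fin 2)) :
    Matrix (Fin 2) (Fin 2) ℂ := fun i j =>
  (if i = j then
      sigma1 lam mu * (‖x‖ : ℂ) ^ 2
        + ((tau1 lam mu : ℂ) * (tau2 lam mu : ℂ) - 1 / (mu : ℂ) ^ 2)
            * (‖x‖ : ℂ) ^ 2 * (Real.log ‖x‖ : ℂ) / (8 * Real.pi)
    else 0)
    + sigma2 lam mu * (x i : ℂ) * (x j : ℂ)
    + ((tau1 lam mu : ℂ) * (tau2 lam mu : ℂ) / (4 * Real.pi))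
        * (x i : ℂ) * (x j : ℂ) * (Real.log ‖x‖ : ℂ)

/-- Partial derivative `∂f/∂y_l` of a complex-valued function on `ℝ²`. -/
noncomputable def pdC (f : EuclideanSpace ℝ (Fin 2) → ℂ) (l : Fin 2)
    (y : EuclideanSpace ℝ (Fin 2)) : ℂ :=
  fderiv ℝ f y (EuclideanSpace.single l 1)

/-- The conormal-derivative kernel `N_B(x,y)`: its `j`-th column is the conormal
derivative, in the variable `y` with outward unit normal `ν(y) = y/R`, of the vector
field `y ↦ B(x−y)e_j`, i.e.
`N_B(x,y)e_j = λ div_y(B(x−y)e_j) ν(y) + μ (D_y(B(x−y)e_j) + D_y(B(x−y)e_j)ᵀ) ν(y)`. -/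
noncomputable def NBker (lam mu R : ℝ) (x y : EuclideanSpace ℝ (Fin 2)) :
    Matrix (Fin 2) (Fin 2) ℂ := fun i j =>
  (lam : ℂ) * (∑ l : Fin 2, pdC (fun z => Bmat lam mu (x - z) l j) l y) * ((y i / R : ℝ) : ℂ)
    + (mu : ℂ) * (∑ l : Fin 2,
        (pdC (fun z => Bmat lam mu (x - z) i j) l y
          + pdC (fun z => Bmat lam mu (x - z) l j) i y) * ((y l / R : ℝ) : ℂ))

/-- The boundary densities `f⁽¹⁾ = (2πR)^{-1/2}(1,0)`, `f⁽²⁾ = (2πR)^{-1/2}(0,1)`,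
`f⁽³⁾ = (2πR³)^{-1/2}(x₂, −x₁)`. -/
noncomputable def fB (R : ℝ) (i : Fin 3) (x : EuclideanSpace ℝ (Fin 2)) : Fin 2 → ℝ :=
  ![![1 / Real.sqrt (2 * Real.pi * R), 0],
    ![0, 1 / Real.sqrt (2 * Real.pi * R)],
    ![x 1 / Real.sqrt (2 * Real.pi * R ^ 3), -(x 0 / Real.sqrt (2 * Real.pi * R ^ 3))]] i

/-- The matrix `P_{ij} = ∫_{∂D}∫_{∂D} f⁽ⁱ⁾(x) · (N_B(x,y) f⁽ʲ⁾(y)) dσ(y) dσ(x)`. -/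
noncomputable def Pmat (lam mu R : ℝ) (i j : Fin 3) : ℂ :=
  ∫ x in Metric.sphere (0 : EuclideanSpace ℝ (Fin 2)) R,
    (∫ y in Metric.sphere (0 : EuclideanSpace ℝ (Fin 2)) R,
      ∑ a : Fin 2, (fB R i x a : ℂ) *
        ((NBker lam mu R x y).mulVec (fun b => (fB R j y b : ℂ))) a
        ∂μH[1]) ∂μH[1]

/-!
Every `e = signedPerm σ s` (a permutation of coordinates combined with sign changes) is a linear
isometry of `ℝ²`, so it preserves the circle and its arclength measure. Since `B(x)` has the
isotropic form `α(|x|) I + β(|x|) x xᵀ`, it satisfies `B(e x) = e B(x) eᵀ`, and hence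
`N_B(e x, e y) = e N_B(x, y) eᵀ`. Each density satisfies `f⁽ᵏ⁾ ∘ e = ± e ∘ f^(π k)`, so the
substitution `(x, y) ↦ (e x, e y)` gives `P_{ij} = ± P_{π i, π j}`. The reflection `x₂ ↦ −x₂`
changes the sign of `P₁₂, P₂₁, P₁₃, P₃₁`, the point reflection `x ↦ −x` that of
`P₁₃, P₃₁, P₂₃, P₃₂`, and the quarter turn, which turns `f⁽¹⁾` into `−f⁽²⁾`, gives `P₁₁ = P₂₂`.

Signed permutations act on the partial derivatives in `N_B` by permuting them up to sign, so no
differentiability of `B` is needed; a general rotation would mix them linearly.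
-/

lemma Int.cast_units_sq {R : Type*} [Ring R] (u : ℤˣ) : ((u : ℤ) : R) ^ 2 = 1 := by
  rw [← Int.cast_pow, ← Units.val_pow_eq_pow_val, Int.units_sq, Units.val_one, Int.cast_one]

section SignedPerm

variable {ι : Type*} [Fintype ι]

noncomputable def signedPerm (σ : Equiv.Perm ι) (s : ι → ℤˣ) :
    EuclideanSpace ℝ ι ≃ₗᵢ[ℝ] EuclideanSpace ℝ ι where
  toFun v := WithLp.toLp 2 fun i => ((s i : ℤ) : ℝ) * v (σ i)
  invFun v := WithLp.toLp 2 fun i => ((s (σ.symm i) : ℤ) : ℝ) * v (σ.symm i)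
  map_add' x y := by ext i; simp [mul_add]
  map_smul' c x := by ext i; simp only [PiLp.smul_apply, smul_eq_mul, RingHom.id_apply]; ring
  left_inv v := by ext i; simp [← mul_assoc, ← sq, Int.cast_units_sq]
  right_inv v := by ext i; simp [← mul_assoc, ← sq, Int.cast_units_sq]
  norm_map' v := by
    simp only [EuclideanSpace.norm_eq, LinearEquiv.coe_mk, LinearMap.coe_mk, AddHom.coe_mk,
      norm_mul, mul_pow, Real.norm_eq_abs, sq_abs, Int.cast_units_sq, one_mul]
    exact congrArg _ (Equiv.sum_comp σ (fun i => v i ^ 2))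

variable (σ : Equiv.Perm ι) (s : ι → ℤˣ)

@[simp] lemma signedPerm_apply (v : EuclideanSpace ℝ ι) (i : ι) :
    signedPerm σ s v i = (s i : ℤ) * v (σ i) := rfl

@[simp] lemma signedPerm_symm_apply (v : EuclideanSpace ℝ ι) (i : ι) :
    (signedPerm σ s).symm v i = (s (σ.symm i) : ℤ) * v (σ.symm i) := rfl

lemma signedPerm_symm_single [DecidableEq ι] (l : ι) :
    (signedPerm σ s).symm (EuclideanSpace.single l 1)
      = ((s l : ℤ) : ℝ) • EuclideanSpace.single (σ l) 1 := by
  ext i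
  simp only [signedPerm_symm_apply, PiLp.single_apply, PiLp.smul_apply, smul_eq_mul,
    Equiv.symm_apply_eq]
  split_ifs <;> subst_vars <;> simp_all

end SignedPerm

section Covariance

variable (σ : Equiv.Perm (Fin 2)) (s : Fin 2 → ℤˣ)

lemma pdC_const_mul (c : ℂ) (g : EuclideanSpace ℝ (Fin 2) → ℂ) (l : Fin 2)
    (y : EuclideanSpace ℝ (Fin 2)) : pdC (fun z => c * g z) l y = c * pdC g l y := by
  simp only [pdC, ← smul_eq_mul]
  rw [show (fun z => c • g z) = c • g from rfl, fderiv_const_smul_field]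
  rfl

lemma pdC_comp_signedPerm_symm (g : EuclideanSpace ℝ (Fin 2) → ℂ) (l : Fin 2)
    (y : EuclideanSpace ℝ (Fin 2)) :
    pdC (fun z => g ((signedPerm σ s).symm z)) l (signedPerm σ s y)
      = (s l : ℤ) * pdC g (σ l) y := by
  rw [pdC, show (fun z => g ((signedPerm σ s).symm z))
      = g ∘ (signedPerm σ s).symm.toContinuousLinearEquiv from rfl,
    ContinuousLinearEquiv.comp_right_fderiv]
  simp [signedPerm_symm_single, pdC]

lemma Bmat_signedPerm (lam mu : ℝ) (v : EuclideanSpace ℝ (Fin 2)) (i j : Fin 2) :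
    Bmat lam mu (signedPerm σ s v) i j
      = (s i : ℤ) * (s j : ℤ) * Bmat lam mu v (σ i) (σ j) := by
  simp only [Bmat, LinearIsometryEquiv.norm_map, signedPerm_apply, σ.injective.eq_iff]
  split_ifs with h
  · subst h
    push_cast
    ring_nf
    rw [Int.cast_units_sq]
    ring
  · push_cast; ring

lemma pdC_Bmat_signedPerm (lam mu : ℝ) (x y : EuclideanSpace ℝ (Fin 2)) (a b l : Fin 2) :
    pdC (fun z => Bmat lam mu (signedPerm σ s x - z) a b) l (signedPerm σ s y)
      = (s a : ℤ) * (s b : ℤ) * (s l : ℤ)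
          * pdC (fun z => Bmat lam mu (x - z) (σ a) (σ b)) (σ l) y := by
  have hB : (fun z => Bmat lam mu (signedPerm σ s x - z) a b)
      = fun z => ((s a : ℤ) * (s b : ℤ) : ℂ)
          * (fun w => Bmat lam mu (x - w) (σ a) (σ b)) ((signedPerm σ s).symm z) := by
    funext z
    rw [← Bmat_signedPerm, map_sub, LinearIsometryEquiv.apply_symm_apply]
  rw [hB, pdC_const_mul,
    pdC_comp_signedPerm_symm σ s (fun w => Bmat lam mu (x - w) (σ a) (σ b))]
  ring

lemma NBker_signedPerm (lam mu R : ℝ) (x y : EuclideanSpace ℝ (Fin 2)) (i j : Fin 2) :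
    NBker lam mu R (signedPerm σ s x) (signedPerm σ s y) i j
      = (s i : ℤ) * (s j : ℤ) * NBker lam mu R x y (σ i) (σ j) := by
  simp only [NBker]
  rw [← Equiv.sum_comp σ (fun l => pdC (fun z => Bmat lam mu (x - z) l (σ j)) l y),
    ← Equiv.sum_comp σ (fun l => (pdC (fun z => Bmat lam mu (x - z) (σ i) (σ j)) l y
          + pdC (fun z => Bmat lam mu (x - z) l (σ j)) (σ i) y) * ((y l / R : ℝ) : ℂ))]
  simp only [pdC_Bmat_signedPerm, signedPerm_apply, mul_add, Finset.mul_sum, Finset.sum_mul,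
    ← Finset.sum_add_distrib]
  refine Finset.sum_congr rfl fun l _ => ?_
  push_cast
  ring_nf
  simp only [Int.cast_units_sq]
  ring

end Covariance

lemma setIntegral_comp_isometryEquiv {X F : Type*} [EMetricSpace X] [MeasurableSpace X]
    [BorelSpace X] [NormedAddCommGroup F] [NormedSpace ℝ F] (e : X ≃ᵢ X) {t : Set X}
    (ht : e ⁻¹' t = t) (d : ℝ) (g : X → F) :
    ∫ x in t, g (e x) ∂μH[d] = ∫ x in t, g x ∂μH[d] := by
  conv_lhs => rw [← ht]
  exact (e.measurePreserving_hausdorffMeasure d).setIntegral_preimage_emb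
    e.toHomeomorph.measurableEmbedding g t

section Pairing

variable (lam mu R : ℝ)

noncomputable def PmatIntegrand (i j : Fin 3) (x y : EuclideanSpace ℝ (Fin 2)) : ℂ :=
  ∑ a : Fin 2, (fB R i x a : ℂ) * ((NBker lam mu R x y).mulVec (fun b => (fB R j y b : ℂ))) a

lemma Pmat_eq_of_PmatIntegrand_comp
    (e : EuclideanSpace ℝ (Fin 2) ≃ₗᵢ[ℝ] EuclideanSpace ℝ (Fin 2)) {i j i' j' : Fin 3} (c : ℂ)
    (h : ∀ x y, PmatIntegrand lam mu R i j (e x) (e y) = c * PmatIntegrand lam mu R i' j' x y) :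
    Pmat lam mu R i j = c * Pmat lam mu R i' j' := by
  have hS : ⇑e.toIsometryEquiv ⁻¹' Metric.sphere 0 R = Metric.sphere 0 R := by
    simp [e.preimage_sphere]
  simp only [Pmat, ← PmatIntegrand.eq_def, ← integral_const_mul]
  rw [← setIntegral_comp_isometryEquiv e.toIsometryEquiv hS]
  congr 1 with x
  rw [← setIntegral_comp_isometryEquiv e.toIsometryEquiv hS]
  exact congrArg _ (funext (h x))

/-- Componentwise form of `f⁽ᵏ⁾ (e x) = c k • e (f^(π k) x)` for `e = signedPerm σ s`. -/
def DensitiesTransform (σ : Equiv.Perm (Fin 2)) (s : Fin 2 → ℤˣ) (π : Fin 3 → Fin 3)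
    (c : Fin 3 → ℝ) : Prop :=
  ∀ k x a, fB R k (signedPerm σ s x) a = c k * (s a : ℤ) * fB R (π k) x (σ a)

variable {R} {σ : Equiv.Perm (Fin 2)} {s : Fin 2 → ℤˣ} {π : Fin 3 → Fin 3} {c : Fin 3 → ℝ}

lemma DensitiesTransform.PmatIntegrand_comp (hf : DensitiesTransform R σ s π c) (i j : Fin 3)
    (x y : EuclideanSpace ℝ (Fin 2)) :
    PmatIntegrand lam mu R i j (signedPerm σ s x) (signedPerm σ s y)
      = c i * c j * PmatIntegrand lam mu R (π i) (π j) x y := by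
  unfold DensitiesTransform at hf
  simp only [PmatIntegrand, Matrix.mulVec, dotProduct]
  conv_rhs => rw [← Equiv.sum_comp σ]
  simp only [hf, NBker_signedPerm, Finset.mul_sum]
  refine Finset.sum_congr rfl fun a _ => ?_
  conv_rhs => rw [← Equiv.sum_comp σ]
  refine Finset.sum_congr rfl fun b _ => ?_
  push_cast
  ring_nf
  simp only [Int.cast_units_sq]
  ring

lemma DensitiesTransform.Pmat_eq (hf : DensitiesTransform R σ s π c) (i j : Fin 3) :
    Pmat lam mu R i j = c i * c j * Pmat lam mu R (π i) (π j) :=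
  Pmat_eq_of_PmatIntegrand_comp lam mu R (signedPerm σ s) _
    (hf.PmatIntegrand_comp lam mu i j)

end Pairing

section Densities

variable (R : ℝ)

lemma densitiesTransform_reflection : DensitiesTransform R 1 ![1, -1] id ![1, -1, -1] := by
  intro k x a
  fin_cases k <;> fin_cases a <;> simp [fB, neg_div]

lemma densitiesTransform_neg : DensitiesTransform R 1 (fun _ => -1) id ![-1, -1, 1] := by
  intro k x a
  fin_cases k <;> fin_cases a <;> simp [fB, neg_div]

lemma densitiesTransform_rotation :
    DensitiesTransform R (Equiv.swap 0 1) ![-1, 1] ![1, 0, 2] ![-1, 1, 1] := by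
  intro k x a
  fin_cases k <;> fin_cases a <;> simp [fB, neg_div]

end Densities

theorem Pmat_diagonal_general (R lam mu : ℝ) :
    (∀ i j : Fin 3, i ≠ j → Pmat lam mu R i j = 0)
    ∧ Pmat lam mu R 0 0 = Pmat lam mu R 1 1 := by
  have hrefl := (densitiesTransform_reflection R).Pmat_eq lam mu
  have hneg := (densitiesTransform_neg R).Pmat_eq lam mu
  have hrot := (densitiesTransform_rotation R).Pmat_eq lam mu 1 1
  refine ⟨?_, by simpa using hrot.symm⟩
  simp [Fin.forall_fin_succ, self_eq_neg] at hrefl hneg ⊢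
  tauto

/-- The `3×3` matrix `P` is diagonal (`P_{ij} = 0` for `i ≠ j`), and `P₁₁ = P₂₂`. -/
theorem Pmat_diagonal (R lam mu : ℝ) (hR : 0 < R)
    (hmu : 0 < mu) (hlm : 0 < lam + mu) :
    (∀ i j : Fin 3, i ≠ j → Pmat lam mu R i j = 0)
    ∧ Pmat lam mu R 0 0 = Pmat lam mu R 1 1 :=
  Pmat_diagonal_general R lam mu
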